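/- Let S² be the unit sphere in ℝ³ and let r : S² → S² be the reflection r(x₁, x₂, x₃) = (x₁, −x₂, x₃). Let τ : S² × S² → S² × S² be the involution τ(x, y) = (r(x), r(y)). Then the orbit space (S² × S²)/⟨τ⟩, equipped with the quotient topology, is homeomorphic to the 4-sphere S⁴. -/

import Mathlib

noncomputable section

/-- The unit 2-sphere in `ℝ³`. -/
abbrev TwoSphere := Metric.sphere (0 : EuclideanSpace ℝ (Fin 3)) 1

/-- The reflection `r(x₁, x₂, x₃) = (x₁, −x₂, x₃)` of `ℝ³`. -/
def reflSecond (x : EuclideanSpace ℝ (Fin 3)) : EuclideanSpace ℝ (Fin 3) :=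
  WithLp.toLp 2 ![x 0, -(x 1), x 2]

lemma reflSecond_mem_sphere (x : TwoSphere) : reflSecond (x : EuclideanSpace ℝ (Fin 3)) ∈
    Metric.sphere (0 : EuclideanSpace ℝ (Fin 3)) 1 := by
  have hx := x.2
  simp only [Metric.mem_sphere, dist_zero_right] at hx ⊢
  rw [EuclideanSpace.norm_eq] at hx ⊢
  rw [← hx]
  congr 1
  rw [Fin.sum_univ_three, Fin.sum_univ_three]
  simp [reflSecond]

/-- The reflection `r` restricted to the 2-sphere. -/
def reflSphere (x : TwoSphere) : TwoSphere :=
  ⟨reflSecond (x : EuclideanSpace ℝ (Fin 3)), reflSecond_mem_sphere x⟩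

/-- The involution `τ(x, y) = (r(x), r(y))` of `S² × S²`. -/
def tau (p : TwoSphere × TwoSphere) : TwoSphere × TwoSphere :=
  (reflSphere p.1, reflSphere p.2)

/-!
The functions `x₀, x₂, y₀, y₂` and `x₁ y₁` on `S² × S²` are `τ`-invariant and separate
`τ`-orbits, so they map the orbit space bijectively onto the hypersurface
`z² = (1 - ‖u‖²)(1 - ‖w‖²)`, `‖u‖, ‖w‖ ≤ 1` of `ℝ² × ℝ² × ℝ`. This hypersurface misses the
origin and meets every open ray from it exactly once: along a ray its equation becomes a
quadratic in the squared scale factor with exactly one admissible root. Radial projection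
therefore gives a continuous bijection from the compact orbit space onto `S⁴`, which is a
homeomorphism since `S⁴` is Hausdorff.
-/

open Metric

theorem Quot.nonempty_homeomorph_of_continuous_surjective {X Y : Type*} [TopologicalSpace X]
    [CompactSpace X] [TopologicalSpace Y] [T2Space Y] {r : X → X → Prop} {f : X → Y}
    (hf : Continuous f) (hsurj : Function.Surjective f) (hr : ∀ p q, r p q → f p = f q)
    (hfib : ∀ p q, f p = f q → Quot.mk r p = Quot.mk r q) : Nonempty (Quot r ≃ₜ Y) := by
  have hinj : Function.Injective (Quot.lift f hr) := by
    rintro ⟨p⟩ ⟨q⟩ h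
    exact hfib p q h
  exact ⟨(continuous_quot_lift hr hf).homeoOfEquivCompactToT2
    (f := .ofBijective _ ⟨hinj, (Quot.surjective_lift hr).2 hsurj⟩)⟩

theorem EuclideanSpace.mem_sphere_zero_one_iff {ι : Type*} [Fintype ι] {x : EuclideanSpace ℝ ι} :
    x ∈ sphere 0 1 ↔ ∑ i, x i ^ 2 = 1 := by
  rw [mem_sphere_zero_iff_norm, ← EuclideanSpace.real_norm_sq_eq,
    pow_eq_one_iff_of_nonneg (norm_nonneg x) two_ne_zero]

theorem eq_one_of_mul_one_sub_mul_one_sub {a b m : ℝ} (ha : 0 ≤ a) (ha₁ : a ≤ 1) (hb : 0 ≤ b)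
    (hb₁ : b ≤ 1) (hma : m * a ≤ 1) (hmb : m * b ≤ 1)
    (h : m * ((1 - a) * (1 - b)) = (1 - m * a) * (1 - m * b)) : m = 1 := by
  have hfac : (m - 1) * (1 - m * a * b) = 0 := by linear_combination h
  rcases mul_eq_zero.1 hfac with hm | hm
  · linarith
  · have hm₀ : 0 < m := by nlinarith [mul_nonneg ha hb]
    have h₁ : 1 ≤ m := by nlinarith [mul_le_one₀ ha₁ hb hb₁]
    have h₂ : m ≤ 1 := by
      calc m = (m * a) * (m * b) := by linear_combination m * hm
        _ ≤ 1 := mul_le_one₀ hma (mul_nonneg hm₀.le hb) hmb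
    linarith

theorem exists_mul_one_sub_eq_mul_one_sub {a b : ℝ} (ha : 0 ≤ a) (hb : 0 ≤ b) (hab : a + b ≤ 1) :
    ∃ m : ℝ, 0 < m ∧ m * a ≤ 1 ∧ m * b ≤ 1 ∧ m * (1 - a - b) = (1 - m * a) * (1 - m * b) := by
  have hdisc : 0 ≤ 1 - 4 * a * b := by nlinarith [sq_nonneg (a - b)]
  set d := √(1 - 4 * a * b)
  have hd : d ^ 2 = 1 - 4 * a * b := Real.sq_sqrt hdisc
  have hd₀ : 0 ≤ d := Real.sqrt_nonneg _
  have hc : 0 ≤ 1 - a - b := by linarith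
  have h2a : 2 * a - 1 ≤ d :=
    (le_abs_self _).trans (Real.abs_le_sqrt (by nlinarith [mul_nonneg ha hc]))
  have h2b : 2 * b - 1 ≤ d :=
    (le_abs_self _).trans (Real.abs_le_sqrt (by nlinarith [mul_nonneg hb hc]))
  have hpos : 0 < 1 + d := by linarith
  -- `m = 2 / (1 + d)` is the smaller root of `a b m² - m + 1 = 0`.
  refine ⟨2 / (1 + d), by positivity, ?_, ?_, ?_⟩
  · rw [div_mul_eq_mul_div, div_le_one hpos]; linarith
  · rw [div_mul_eq_mul_div, div_le_one hpos]; linarith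
  · field_simp
    linear_combination -hd

theorem exists_sq_eq_sq_eq_mul_eq {s t c : ℝ} (hs : 0 ≤ s) (ht : 0 ≤ t) (h : c ^ 2 = s * t) :
    ∃ a b : ℝ, a ^ 2 = s ∧ b ^ 2 = t ∧ a * b = c := by
  have hst : √s * √t = |c| := by rw [← Real.sqrt_mul hs, ← h, Real.sqrt_sq_eq_abs]
  rcases le_total 0 c with hc | hc
  · exact ⟨√s, √t, Real.sq_sqrt hs, Real.sq_sqrt ht, by rw [hst, abs_of_nonneg hc]⟩
  · exact ⟨-√s, √t, by rw [neg_sq, Real.sq_sqrt hs], Real.sq_sqrt ht,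
      by rw [neg_mul, hst, abs_of_nonpos hc, neg_neg]⟩

namespace TwoSphere

theorem sum_sq_apply (x : TwoSphere) : x.1 0 ^ 2 + x.1 1 ^ 2 + x.1 2 ^ 2 = 1 := by
  simpa [Fin.sum_univ_three] using EuclideanSpace.mem_sphere_zero_one_iff.1 x.2

theorem ext {x y : TwoSphere} (h₀ : x.1 0 = y.1 0) (h₁ : x.1 1 = y.1 1) (h₂ : x.1 2 = y.1 2) :
    x = y := by
  ext i
  fin_cases i <;> assumption

def mk (a b c : ℝ) (h : a ^ 2 + b ^ 2 + c ^ 2 = 1) : TwoSphere :=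
  ⟨!₂[a, b, c], EuclideanSpace.mem_sphere_zero_one_iff.2 (by simpa [Fin.sum_univ_three] using h)⟩

end TwoSphere

@[simp] theorem reflSphere_apply_zero (x : TwoSphere) : (reflSphere x).1 0 = x.1 0 := rfl
@[simp] theorem reflSphere_apply_one (x : TwoSphere) : (reflSphere x).1 1 = -x.1 1 := rfl
@[simp] theorem reflSphere_apply_two (x : TwoSphere) : (reflSphere x).1 2 = x.1 2 := rfl

theorem reflSphere_eq_self {x : TwoSphere} (h : x.1 1 = 0) : reflSphere x = x :=
  TwoSphere.ext rfl (by simp [h]) rfl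

theorem eq_or_eq_reflSphere_of_apply_eq {x y : TwoSphere} (h₀ : y.1 0 = x.1 0)
    (h₂ : y.1 2 = x.1 2) : y = x ∨ y = reflSphere x := by
  have hsq : y.1 1 ^ 2 = x.1 1 ^ 2 := by
    linarith [TwoSphere.sum_sq_apply x, h₀ ▸ h₂ ▸ TwoSphere.sum_sq_apply y]
  rcases sq_eq_sq_iff_eq_or_eq_neg.1 hsq with h₁ | h₁
  · exact .inl (TwoSphere.ext h₀ h₁ h₂)
  · exact .inr (TwoSphere.ext h₀ (by simpa using h₁) h₂)

def tauInvariants (p : TwoSphere × TwoSphere) : EuclideanSpace ℝ (Fin 5) :=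
  !₂[p.1.1 0, p.1.1 2, p.2.1 0, p.2.1 2, p.1.1 1 * p.2.1 1]

theorem continuous_tauInvariants : Continuous tauInvariants := by
  unfold tauInvariants
  fun_prop

theorem tauInvariants_tau (p : TwoSphere × TwoSphere) :
    tauInvariants (tau p) = tauInvariants p := by
  simp [tauInvariants, tau]

theorem tauInvariants_ne_zero (p : TwoSphere × TwoSphere) : tauInvariants p ≠ 0 := by
  intro h
  obtain ⟨h₁₀, h₁₂, h₂₀, h₂₂, h₁₁ | h₁₁⟩ : p.1.1 0 = 0 ∧ p.1.1 2 = 0 ∧ p.2.1 0 = 0 ∧ p.2.1 2 = 0 ∧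
      (p.1.1 1 = 0 ∨ p.2.1 1 = 0) := by simpa [tauInvariants] using h
  · simpa [h₁₀, h₁₁, h₁₂] using TwoSphere.sum_sq_apply p.1
  · simpa [h₂₀, h₁₁, h₂₂] using TwoSphere.sum_sq_apply p.2

theorem eq_or_eq_tau_of_tauInvariants_eq {p q : TwoSphere × TwoSphere}
    (h : tauInvariants q = tauInvariants p) : q = p ∨ q = tau p := by
  obtain ⟨x, y⟩ := p
  obtain ⟨x', y'⟩ := q
  obtain ⟨h₁₀, h₁₂, h₂₀, h₂₂, h₁₁⟩ : x'.1 0 = x.1 0 ∧ x'.1 2 = x.1 2 ∧ y'.1 0 = y.1 0 ∧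
      y'.1 2 = y.1 2 ∧ x'.1 1 * y'.1 1 = x.1 1 * y.1 1 := by simpa [tauInvariants] using h
  have hmixed : x.1 1 = 0 ∨ y.1 1 = 0 → reflSphere x = x ∨ reflSphere y = y :=
    Or.imp reflSphere_eq_self reflSphere_eq_self
  rcases eq_or_eq_reflSphere_of_apply_eq h₁₀ h₁₂ with rfl | rfl <;>
    rcases eq_or_eq_reflSphere_of_apply_eq h₂₀ h₂₂ with rfl | rfl
  · exact .inl rfl
  · rcases hmixed (mul_eq_zero.1 (by simp only [reflSphere_apply_one] at h₁₁; linarith))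
      with hx | hy
    · exact .inr (by rw [tau, hx])
    · exact .inl (by rw [hy])
  · rcases hmixed (mul_eq_zero.1 (by simp only [reflSphere_apply_one] at h₁₁; linarith))
      with hx | hy
    · exact .inl (by rw [hx])
    · exact .inr (by rw [tau, hy])
  · exact .inr rfl

theorem eq_one_of_smul_tauInvariants_eq {p q : TwoSphere × TwoSphere} {c : ℝ} (hc : 0 < c)
    (h : c • tauInvariants p = tauInvariants q) : c = 1 := by
  obtain ⟨x, y⟩ := p
  obtain ⟨x', y'⟩ := q
  obtain ⟨h₁₀, h₁₂, h₂₀, h₂₂, h₁₁⟩ : c * x.1 0 = x'.1 0 ∧ c * x.1 2 = x'.1 2 ∧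
      c * y.1 0 = y'.1 0 ∧ c * y.1 2 = y'.1 2 ∧ c * (x.1 1 * y.1 1) = x'.1 1 * y'.1 1 := by
    simpa [tauInvariants, PiLp.ext_iff, Fin.forall_fin_succ] using h
  set a := x.1 0 ^ 2 + x.1 2 ^ 2
  set b := y.1 0 ^ 2 + y.1 2 ^ 2
  have hx : x.1 1 ^ 2 = 1 - a := by linarith [TwoSphere.sum_sq_apply x]
  have hy : y.1 1 ^ 2 = 1 - b := by linarith [TwoSphere.sum_sq_apply y]
  have hx' : x'.1 1 ^ 2 = 1 - c ^ 2 * a := by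
    linarith [h₁₀ ▸ h₁₂ ▸ TwoSphere.sum_sq_apply x']
  have hy' : y'.1 1 ^ 2 = 1 - c ^ 2 * b := by
    linarith [h₂₀ ▸ h₂₂ ▸ TwoSphere.sum_sq_apply y']
  have hc2 : c ^ 2 = 1 := by
    refine eq_one_of_mul_one_sub_mul_one_sub (a := a) (b := b) (by positivity)
      (by linarith [sq_nonneg (x.1 1)]) (by positivity) (by linarith [sq_nonneg (y.1 1)])
      (by linarith [sq_nonneg (x'.1 1)]) (by linarith [sq_nonneg (y'.1 1)]) ?_
    calc c ^ 2 * ((1 - a) * (1 - b)) = (c * (x.1 1 * y.1 1)) ^ 2 := by rw [← hx, ← hy]; ring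
      _ = (1 - c ^ 2 * a) * (1 - c ^ 2 * b) := by rw [h₁₁, mul_pow, hx', hy']
  exact (pow_eq_one_iff_of_nonneg hc.le two_ne_zero).1 hc2

theorem exists_smul_eq_tauInvariants (v : sphere (0 : EuclideanSpace ℝ (Fin 5)) 1) :
    ∃ p, ∃ c : ℝ, 0 < c ∧ c • (v : EuclideanSpace ℝ (Fin 5)) = tauInvariants p := by
  have hv : v.1 0 ^ 2 + v.1 1 ^ 2 + v.1 2 ^ 2 + v.1 3 ^ 2 + v.1 4 ^ 2 = 1 := by
    simpa [Fin.sum_univ_five] using EuclideanSpace.mem_sphere_zero_one_iff.1 v.2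
  obtain ⟨m, hm, hma, hmb, hmab⟩ := exists_mul_one_sub_eq_mul_one_sub
    (a := v.1 0 ^ 2 + v.1 1 ^ 2) (b := v.1 2 ^ 2 + v.1 3 ^ 2) (by positivity) (by positivity)
    (by linarith [sq_nonneg (v.1 4)])
  obtain ⟨s, t, hs, ht, hst⟩ := exists_sq_eq_sq_eq_mul_eq (c := √m * v.1 4)
    (sub_nonneg.2 hma) (sub_nonneg.2 hmb)
    (by rw [mul_pow, Real.sq_sqrt hm.le, ← hmab]; linear_combination m * hv)
  refine ⟨(TwoSphere.mk (√m * v.1 0) s (√m * v.1 1) ?_,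
    TwoSphere.mk (√m * v.1 2) t (√m * v.1 3) ?_), √m, Real.sqrt_pos.2 hm, ?_⟩
  · rw [mul_pow, mul_pow, Real.sq_sqrt hm.le, hs]; ring
  · rw [mul_pow, mul_pow, Real.sq_sqrt hm.le, ht]; ring
  · ext i
    fin_cases i <;> simp [tauInvariants, TwoSphere.mk, hst]

def tauSphereMap (p : TwoSphere × TwoSphere) : sphere (0 : EuclideanSpace ℝ (Fin 5)) 1 :=
  ⟨‖tauInvariants p‖⁻¹ • tauInvariants p,
    mem_sphere_zero_iff_norm.2 (norm_smul_inv_norm (tauInvariants_ne_zero p))⟩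

theorem continuous_tauSphereMap : Continuous tauSphereMap :=
  ((continuous_tauInvariants.norm.inv₀ fun p => norm_ne_zero_iff.2 (tauInvariants_ne_zero p)).smul
    continuous_tauInvariants).subtype_mk _

theorem tauSphereMap_tau (p : TwoSphere × TwoSphere) : tauSphereMap (tau p) = tauSphereMap p := by
  simp only [tauSphereMap, tauInvariants_tau]

theorem eq_or_eq_tau_of_tauSphereMap_eq {p q : TwoSphere × TwoSphere}
    (h : tauSphereMap p = tauSphereMap q) : q = p ∨ q = tau p := by
  have hray : SameRay ℝ (tauInvariants p) (tauInvariants q) :=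
    (sameRay_iff_inv_norm_smul_eq_of_ne (tauInvariants_ne_zero p) (tauInvariants_ne_zero q)).2
      (congrArg Subtype.val h)
  obtain ⟨c, hc, hpq⟩ := hray.exists_pos_left (tauInvariants_ne_zero p) (tauInvariants_ne_zero q)
  rw [eq_one_of_smul_tauInvariants_eq hc hpq, one_smul] at hpq
  exact eq_or_eq_tau_of_tauInvariants_eq hpq.symm

theorem tauSphereMap_surjective : Function.Surjective tauSphereMap := by
  intro v
  obtain ⟨p, c, hc, hp⟩ := exists_smul_eq_tauInvariants v
  refine ⟨p, Subtype.ext ?_⟩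
  change ‖tauInvariants p‖⁻¹ • tauInvariants p = v.1
  rw [← hp, norm_smul, norm_eq_of_mem_sphere v, mul_one, Real.norm_of_nonneg hc.le,
    inv_smul_smul₀ hc.ne']

/-- The orbit space of `S² × S²` by the simultaneous reflection `τ(x, y) = (r(x), r(y))`,
where `r(x₁, x₂, x₃) = (x₁, −x₂, x₃)`, equipped with the quotient topology, is
homeomorphic to the 4-sphere `S⁴`. -/
theorem s2_x_s2_quotient_reflection_homeomorph_s4 :
    Nonempty ((Quot fun p q : TwoSphere × TwoSphere => q = tau p) ≃ₜ
      Metric.sphere (0 : EuclideanSpace ℝ (Fin 5)) 1) :=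
  Quot.nonempty_homeomorph_of_continuous_surjective continuous_tauSphereMap tauSphereMap_surjective
    (fun p _ h => h ▸ (tauSphereMap_tau p).symm)
    fun _ _ h => (eq_or_eq_tau_of_tauSphereMap_eq h).elim (fun h => h ▸ rfl) fun h => Quot.sound h

end
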